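/- arXiv:2308.13753 — 2 statements merged into one kernel-verified Lean document; each statement's English description precedes it below -/
import Mathlib

section
/- Let (γ_j) be nonincreasing in (0,1] with δ = liminf_{j→∞} (ln γ_j⁻¹)/(ln j) > 0 and α_1 > 1/2. Then for every τ > max{1/δ, 1/(2α_1)}, sup_{d∈ℕ} ∏_{j=1}^d (1 + 2γ_j^τ ζ(2α_jτ)) < ∞, where α_j ≥ α_1 is nondecreasing. -/
/-!
If `r < liminf log (γ j)⁻¹ / log j` then eventually `γ j ≤ j ^ (-r)`, so choosing `1/τ < r < δ`
makes `∑ γ j ^ τ` converge. Since `α` is nondecreasing, every factor is at most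
`1 + 2 γ_j^τ ζ(2 α₁ τ)` with `2 α₁ τ > 1`, and `∏ (1 + c j) ≤ exp (∑ c j)` bounds the products
uniformly in `d`.
-/

noncomputable def zeta (s : ℝ) : ℝ := ∑' k : ℕ, ((k : ℝ) + 1) ^ (-s)

open Filter Real

lemma summable_nat_add_one_rpow_neg {s : ℝ} (hs : 1 < s) :
    Summable fun k : ℕ => ((k : ℝ) + 1) ^ (-s) := by
  have h := (summable_nat_add_iff 1).2 (Real.summable_nat_rpow.2 (by linarith : -s < -1))
  simpa only [Nat.cast_add, Nat.cast_one] using h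

lemma zeta_nonneg (s : ℝ) : 0 ≤ zeta s :=
  tsum_nonneg fun _ => rpow_nonneg (by positivity) _

lemma zeta_le_zeta {s t : ℝ} (hs : 1 < s) (hst : s ≤ t) : zeta t ≤ zeta s :=
  (summable_nat_add_one_rpow_neg (hs.trans_le hst)).tsum_le_tsum
    (fun k => rpow_le_rpow_of_exponent_le (by linarith [k.cast_nonneg (α := ℝ)]) (by linarith))
    (summable_nat_add_one_rpow_neg hs)

lemma isBoundedUnder_ge_log_inv_div_log {γ : ℕ → ℝ} (hγ : ∀ j, 0 < γ j ∧ γ j ≤ 1) :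
    IsBoundedUnder (· ≥ ·) atTop fun j : ℕ => log (γ j)⁻¹ / log j :=
  isBoundedUnder_of_eventually_ge <| Eventually.of_forall fun j =>
    div_nonneg (log_nonneg (one_le_inv₀ (hγ j).1 |>.2 (hγ j).2)) (log_natCast_nonneg j)

lemma eventually_le_rpow_neg_of_lt_liminf {γ : ℕ → ℝ} (hγ : ∀ j, 0 < γ j ∧ γ j ≤ 1) {r : ℝ}
    (hr : r < liminf (fun j : ℕ => log (γ j)⁻¹ / log j) atTop) :
    ∀ᶠ j : ℕ in atTop, γ j ≤ (j : ℝ) ^ (-r) := by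
  filter_upwards [eventually_lt_of_lt_liminf hr (isBoundedUnder_ge_log_inv_div_log hγ),
    eventually_ge_atTop 2] with j hj hj2
  have hj1 : (1 : ℝ) < j := by exact_mod_cast hj2
  have hγj := (hγ j).1
  have hlog : log ((j : ℝ) ^ r) < log (γ j)⁻¹ := by
    rw [log_rpow (by linarith)]
    exact (lt_div_iff₀ (log_pos hj1)).1 hj
  have : (j : ℝ) ^ r < (γ j)⁻¹ := (log_lt_log_iff (by positivity) (by positivity)).1 hlog
  rw [rpow_neg (by linarith)]
  exact ((lt_inv_comm₀ (by positivity) hγj).1 this).le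

lemma summable_rpow_of_eventually_le_rpow_neg {γ : ℕ → ℝ} (hγ : ∀ j, 0 ≤ γ j) {r τ : ℝ}
    (hτ : 0 ≤ τ) (hrτ : 1 < r * τ) (h : ∀ᶠ j : ℕ in atTop, γ j ≤ (j : ℝ) ^ (-r)) :
    Summable fun j => γ j ^ τ := by
  refine Summable.of_norm_bounded_eventually_nat
    (Real.summable_nat_rpow.2 (by linarith : -(r * τ) < -1)) ?_
  filter_upwards [h] with j hj
  rw [norm_of_nonneg (rpow_nonneg (hγ j) _), neg_mul_eq_neg_mul, rpow_mul j.cast_nonneg]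
  exact rpow_le_rpow (hγ j) hj hτ

lemma summable_rpow_of_inv_lt_liminf {γ : ℕ → ℝ} (hγ : ∀ j, 0 < γ j ∧ γ j ≤ 1) {τ : ℝ}
    (hτ : 0 < τ) (h : τ⁻¹ < liminf (fun j : ℕ => log (γ j)⁻¹ / log j) atTop) :
    Summable fun j => γ j ^ τ := by
  obtain ⟨r, hτr, hr⟩ := exists_between h
  refine summable_rpow_of_eventually_le_rpow_neg (fun j => (hγ j).1.le) hτ.le ?_
    (eventually_le_rpow_neg_of_lt_liminf hγ hr)
  rwa [inv_lt_iff_one_lt_mul₀ hτ] at hτr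

lemma prod_one_add_le_exp_tsum {ι : Type*} {c : ι → ℝ} (hc : ∀ i, 0 ≤ c i) (hs : Summable c)
    (s : Finset ι) : ∏ i ∈ s, (1 + c i) ≤ exp (∑' i, c i) :=
  (prod_one_add_le_exp_sum s hc).trans (exp_le_exp.2 (hs.sum_le_tsum s fun i _ => hc i))

theorem stmt_16_general (γ : ℕ → ℝ) (hγ : ∀ j, 0 < γ j ∧ γ j ≤ 1)
    (δ : ℝ) (hδ0 : 0 < δ)
    (hδ : Filter.liminf (fun j : ℕ => Real.log (γ j)⁻¹ / Real.log j) Filter.atTop = δ)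
    (α : ℕ → ℝ) (hα : Monotone α) (hα1 : 1 / 2 < α 1)
    (τ : ℝ) (hτ : max (1 / δ) (1 / (2 * α 1)) < τ) :
    ∃ B : ℝ, ∀ d : ℕ,
      ∏ j ∈ Finset.Icc 1 d, (1 + 2 * γ j ^ τ * zeta (2 * α j * τ)) ≤ B := by
  obtain ⟨hτδ, hτα⟩ := max_lt_iff.1 hτ
  have hτ0 : 0 < τ := (one_div_pos.2 hδ0).trans hτδ
  have hs : 1 < 2 * α 1 * τ := by
    rw [div_lt_iff₀ (by linarith)] at hτα
    linarith
  have hsum : Summable fun j => γ j ^ τ := by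
    refine summable_rpow_of_inv_lt_liminf hγ hτ0 ?_
    rwa [hδ, ← one_div, one_div_lt hτ0 hδ0]
  have hγτ : ∀ j, 0 ≤ γ j ^ τ := fun j => rpow_nonneg (hγ j).1.le τ
  set Z := zeta (2 * α 1 * τ)
  have hZ : 0 ≤ Z := zeta_nonneg _
  refine ⟨exp (∑' j, 2 * γ j ^ τ * Z), fun d => ?_⟩
  calc ∏ j ∈ Finset.Icc 1 d, (1 + 2 * γ j ^ τ * zeta (2 * α j * τ))
      ≤ ∏ j ∈ Finset.Icc 1 d, (1 + 2 * γ j ^ τ * Z) := by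
        refine Finset.prod_le_prod (fun j _ => ?_) fun j hj => ?_
        · have := hγτ j
          have := zeta_nonneg (2 * α j * τ)
          positivity
        · have hαj : α 1 ≤ α j := hα (Finset.mem_Icc.1 hj).1
          have := hγτ j
          gcongr
          exact zeta_le_zeta hs (by gcongr)
    _ ≤ exp (∑' j, 2 * γ j ^ τ * Z) :=
        prod_one_add_le_exp_tsum (fun j => by have := hγτ j; positivity)
          ((hsum.mul_left 2).mul_right Z) _

theorem stmt_16 (γ : ℕ → ℝ) (hγ : ∀ j, 0 < γ j ∧ γ j ≤ 1) (hmono : Antitone γ)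
    (δ : ℝ) (hδ0 : 0 < δ)
    (hδ : Filter.liminf (fun j : ℕ => Real.log (γ j)⁻¹ / Real.log j) Filter.atTop = δ)
    (α : ℕ → ℝ) (hα : Monotone α) (hα1 : 1 / 2 < α 1)
    (τ : ℝ) (hτ : max (1 / δ) (1 / (2 * α 1)) < τ) :
    ∃ B : ℝ, ∀ d : ℕ,
      ∏ j ∈ Finset.Icc 1 d, (1 + 2 * γ j ^ τ * zeta (2 * α j * τ)) ≤ B :=
  stmt_16_general γ hγ δ hδ0 hδ α hα hα1 τ hτ
end

section
/- Let (λ_{d,n})_{n∈ℕ} for each d be the nonincreasing rearrangement of the values {∏_{j=1}^d r_{α_j,γ_j}(k_j) : k ∈ ℤ^d}. Then for n(ε,d) := |{k ∈ ℤ^d : ∏_{j=1}^d r_{α_j,γ_j}(k_j) > ε²}| and any τ with 2α_1τ > 1, n(ε,d) ≤ 1 + ε^{-2τ} ∏_{j=1}^d (1 + 2γ_j^τ ζ(2α_jτ)). -/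
noncomputable def r (α γ : ℝ) (k : ℤ) : ℝ :=
  if k = 0 then 1 else γ * |(k : ℝ)| ^ (-(2 * α))

/-! Markov's inequality: every counted `k` has `ε ^ (2τ) ≤ ∏ⱼ r(kⱼ) ^ τ`, and summing the
nonnegative function `k ↦ ∏ⱼ r(kⱼ) ^ τ` over any finite box in `ℤ^d` gives a product of
one-dimensional sums, each bounded by `∑_{m ∈ ℤ} r(m) ^ τ = 1 + 2 γ ^ τ ζ(2ατ)`. -/

open Finset

lemma r_nonneg {α γ : ℝ} (hγ : 0 ≤ γ) (k : ℤ) : 0 ≤ r α γ k := by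
  unfold r
  split_ifs <;> positivity

lemma hasSum_zeta {s : ℝ} (hs : 1 < s) :
    HasSum (fun k : ℕ => ((k : ℝ) + 1) ^ (-s)) (zeta s) := by
  have h : Summable (fun k : ℕ => (k : ℝ) ^ (-s)) := Real.summable_nat_rpow.mpr (by linarith)
  unfold zeta
  exact_mod_cast ((summable_nat_add_iff 1).mpr h).hasSum

lemma r_rpow_of_ne_zero {α γ : ℝ} (hγ : 0 ≤ γ) (τ : ℝ) {k : ℤ} (hk : k ≠ 0) :
    r α γ k ^ τ = γ ^ τ * |(k : ℝ)| ^ (-(2 * α * τ)) := by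
  rw [r, if_neg hk, Real.mul_rpow hγ (by positivity), ← Real.rpow_mul (abs_nonneg _)]
  ring_nf

lemma hasSum_r_rpow {α γ τ : ℝ} (hγ : 0 ≤ γ) (hs : 1 < 2 * α * τ) :
    HasSum (fun k : ℤ => r α γ k ^ τ) (1 + 2 * γ ^ τ * zeta (2 * α * τ)) := by
  have hterm : ∀ n : ℕ, r α γ (n + 1) ^ τ = γ ^ τ * ((n : ℝ) + 1) ^ (-(2 * α * τ)) ∧
      r α γ (-(n + 1)) ^ τ = γ ^ τ * ((n : ℝ) + 1) ^ (-(2 * α * τ)) := by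
    intro n
    rw [r_rpow_of_ne_zero hγ τ (by omega), r_rpow_of_ne_zero hγ τ (by omega)]
    push_cast
    rw [abs_neg, abs_of_pos (by positivity)]
    exact ⟨rfl, rfl⟩
  have htail := (hasSum_zeta hs).mul_left (γ ^ τ)
  have hpos : HasSum (fun n : ℕ => r α γ n ^ τ) (1 + γ ^ τ * zeta (2 * α * τ)) := by
    rw [← hasSum_nat_add_iff' 1]
    have hr0 : r α γ 0 ^ τ = 1 := by simp [r]
    simpa [hr0, hterm] using htail
  convert hpos.of_nat_of_neg_add_one (f := fun k : ℤ => r α γ k ^ τ)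
    (by simpa only [hterm] using htail) using 1
  ring

lemma Set.finite_of_forall_finset_card_le {α : Type*} {s : Set α} (N : ℕ)
    (h : ∀ F : Finset α, ↑F ⊆ s → F.card ≤ N) : s.Finite := by
  by_contra hs
  obtain ⟨F, hFs, hF⟩ := Set.Infinite.exists_subset_card_eq hs (N + 1)
  have := h F hFs
  omega

lemma card_mul_le_prod_of_hasSum {ι κ : Type*} [Fintype ι] {f : ι → κ → ℝ}
    (hf : ∀ j m, 0 ≤ f j m) {S : ι → ℝ} (hS : ∀ j, HasSum (f j) (S j)) {c : ℝ}
    {F : Finset (ι → κ)} (hF : ∀ k ∈ F, c ≤ ∏ j, f j (k j)) :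
    F.card * c ≤ ∏ j, S j := by
  classical
  let T : ι → Finset κ := fun j => F.image (· j)
  have hFT : F ⊆ Fintype.piFinset T := fun k hk =>
    Fintype.mem_piFinset.mpr fun j => mem_image_of_mem _ hk
  calc F.card * c = F.card • c := (nsmul_eq_mul _ _).symm
    _ ≤ ∑ k ∈ F, ∏ j, f j (k j) := card_nsmul_le_sum _ _ _ hF
    _ ≤ ∑ k ∈ Fintype.piFinset T, ∏ j, f j (k j) :=
      sum_le_sum_of_subset_of_nonneg hFT fun k _ _ => prod_nonneg fun j _ => hf j _
    _ = ∏ j, ∑ m ∈ T j, f j m := (prod_univ_sum T f).symm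
    _ ≤ ∏ j, S j := prod_le_prod (fun j _ => sum_nonneg fun m _ => hf j m)
      fun j _ => sum_le_hasSum _ (fun m _ => hf j m) (hS j)

lemma finite_and_ncard_mul_le_prod_of_hasSum {ι κ : Type*} [Fintype ι] {f : ι → κ → ℝ}
    (hf : ∀ j m, 0 ≤ f j m) {S : ι → ℝ} (hS : ∀ j, HasSum (f j) (S j)) {c : ℝ} (hc : 0 < c) :
    {k : ι → κ | c ≤ ∏ j, f j (k j)}.Finite ∧
      {k : ι → κ | c ≤ ∏ j, f j (k j)}.ncard * c ≤ ∏ j, S j := by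
  have hcard : ∀ F : Finset (ι → κ), ↑F ⊆ {k : ι → κ | c ≤ ∏ j, f j (k j)} →
      F.card * c ≤ ∏ j, S j := fun F hF => card_mul_le_prod_of_hasSum hf hS hF
  have hfin : {k : ι → κ | c ≤ ∏ j, f j (k j)}.Finite := by
    refine Set.finite_of_forall_finset_card_le ⌊(∏ j, S j) / c⌋₊ fun F hF => ?_
    exact Nat.le_floor ((le_div_iff₀ hc).mpr (hcard F hF))
  refine ⟨hfin, ?_⟩
  rw [Set.ncard_eq_toFinset_card _ hfin]
  exact hcard _ (by simp)

theorem stmt_19 (γ : ℕ → ℝ) (hγ : ∀ j, 0 ≤ γ j ∧ γ j ≤ 1)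
    (α : ℕ → ℝ) (hα : Monotone α) (hα1 : 1 / 2 < α 0)
    (d : ℕ) (ε : ℝ) (hε : 0 < ε ∧ ε < 1)
    (τ : ℝ) (hτ : 1 / (2 * α 0) < τ) :
    {k : Fin d → ℤ | ε ^ 2 < ∏ j : Fin d, r (α j) (γ j) (k j)}.Finite ∧
    (({k : Fin d → ℤ | ε ^ 2 < ∏ j : Fin d, r (α j) (γ j) (k j)}).ncard : ℝ)
      ≤ 1 + ε ^ (-(2 * τ)) *
          ∏ j ∈ Finset.range d, (1 + 2 * γ j ^ τ * zeta (2 * α j * τ)) := by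
  have hα0 : 0 < α 0 := by linarith
  have hτ0 : 0 < τ := lt_trans (by positivity) hτ
  have hs : ∀ j, 1 < 2 * α j * τ := fun j => by
    have := (div_lt_iff₀ (by positivity)).mp hτ
    nlinarith [hα (Nat.zero_le j)]
  have hc : 0 < ε ^ (2 * τ) := Real.rpow_pos_of_pos hε.1 _
  obtain ⟨hfin, hncard⟩ := finite_and_ncard_mul_le_prod_of_hasSum
    (fun (j : Fin d) m => Real.rpow_nonneg (r_nonneg (hγ j).1 m) τ)
    (fun j => hasSum_r_rpow (α := α j) (hγ j).1 (hs j)) hc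
  have hsub : {k : Fin d → ℤ | ε ^ 2 < ∏ j : Fin d, r (α j) (γ j) (k j)} ⊆
      {k | ε ^ (2 * τ) ≤ ∏ j : Fin d, r (α j) (γ j) (k j) ^ τ} := fun k hk => by
    rw [Set.mem_ofPred_eq, Real.finsetProd_rpow _ (fun j : Fin d => r (α j) (γ j) (k j))
      (fun j _ => r_nonneg (hγ j).1 _),
      Real.rpow_mul hε.1.le, Real.rpow_two]
    exact Real.rpow_le_rpow (by positivity) hk.le hτ0.le
  refine ⟨hfin.subset hsub, ?_⟩
  rw [Fin.prod_univ_eq_prod_range (fun j => 1 + 2 * γ j ^ τ * zeta (2 * α j * τ))] at hncard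
  calc _ ≤ ({k : Fin d → ℤ | ε ^ (2 * τ) ≤ ∏ j : Fin d, r (α j) (γ j) (k j) ^ τ}.ncard : ℝ) :=
        by exact_mod_cast Set.ncard_le_ncard hsub hfin
    _ ≤ ε ^ (-(2 * τ)) * ∏ j ∈ Finset.range d, (1 + 2 * γ j ^ τ * zeta (2 * α j * τ)) := by
        rw [Real.rpow_neg hε.1.le, inv_mul_eq_div]
        exact (le_div_iff₀ hc).mpr hncard
    _ ≤ _ := le_add_of_nonneg_left zero_le_one
end
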